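/- Let δ ∈ [0,1] be fixed and define S(δ,m) := |sin(π⌊δm⌋/m)/(m sin(π/m)) + (δ - ⌊δm⌋/m)·e((⌊δm⌋+1)/(2m))| where e(x) = exp(2πix). Then as m → ∞, S(δ,m) = sin(πδ)/π + O(1/m). -/

import Mathlib

open Complex Real

/-- `e(x) = exp(2πix)`. -/
noncomputable def e (x : ℝ) : ℂ := Complex.exp (2 * Real.pi * Complex.I * x)

/-- The extremal bound `S(δ, m)` for linear combinations of `m`-th roots of unity. -/
noncomputable def S (δ : ℝ) (m : ℕ) : ℝ :=
  ‖
    ((Real.sin (Real.pi * (⌊δ * m⌋ : ℝ) / m) / (m * Real.sin (Real.pi / m)) : ℝ)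
      + ((δ - (⌊δ * m⌋ : ℝ) / m : ℝ) : ℂ) * e (((⌊δ * m⌋ : ℝ) + 1) / (2 * m)))‖

lemma sub_sq_le_sin {x : ℝ} (hx : 0 ≤ x) : x - x^2/2 ≤ Real.sin x := by
  have mono : MonotoneOn (fun t : ℝ => Real.sin t - t + t^2/2) (Set.Ici 0) := by
    apply monotoneOn_of_deriv_nonneg (convex_Ici 0)
    · fun_prop
    · fun_prop
    · intro y hy
      simp only [interior_Ici, Set.mem_Ioi] at hy
      have hd : HasDerivAt (fun t : ℝ => Real.sin t - t + t^2/2) (Real.cos y - 1 + y) y := by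
        have h1 := (Real.hasDerivAt_sin y).sub (hasDerivAt_id y)
        have h2 : HasDerivAt (fun t : ℝ => t^2/2) y y := by
          simpa using ((hasDerivAt_pow 2 y).div_const 2)
        exact h1.add h2
      rw [hd.deriv]
      rcases le_total y 2 with h | h
      · nlinarith [Real.one_sub_sq_div_two_le_cos (x := y)]
      · nlinarith [Real.neg_one_le_cos y]
  have := mono (Set.self_mem_Ici) (Set.mem_Ici.2 hx) hx
  simp at this
  linarith

lemma sin_lip (a b : ℝ) : |Real.sin a - Real.sin b| ≤ |a - b| := by
  rw [Real.sin_sub_sin, abs_mul, abs_mul, _root_.abs_two]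
  have hu : |Real.sin ((a - b)/2)| ≤ |(a - b)/2| := Real.abs_sin_le_abs
  have hc := Real.abs_cos_le_one ((a + b)/2)
  have hc0 := abs_nonneg (Real.cos ((a + b)/2))
  have hs0 := abs_nonneg (Real.sin ((a - b)/2))
  have he : |(a - b)/2| = |a - b|/2 := by rw [abs_div, _root_.abs_two]
  nlinarith [abs_nonneg (a - b)]

lemma abs_e (x : ℝ) : ‖e x‖ = 1 := by
  unfold e
  rw [Complex.norm_exp]
  simp

set_option maxHeartbeats 1600000 in
theorem stmt_1 :
    ∃ C : ℝ, 0 < C ∧ ∀ δ ∈ Set.Icc (0:ℝ) 1, ∀ m : ℕ, 3 ≤ m →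
      |S δ m - Real.sin (Real.pi * δ) / Real.pi| ≤ C / m := by
  refine ⟨10, by norm_num, ?_⟩
  rintro δ ⟨hδ0, hδ1⟩ m hm
  have hm0 : (0:ℝ) < m := by positivity
  have hm3 : (3:ℝ) ≤ m := by exact_mod_cast hm
  set k : ℝ := (⌊δ * m⌋ : ℝ) with hk
  have hk0 : 0 ≤ k := by
    have h : (0:ℤ) ≤ ⌊δ * m⌋ := Int.floor_nonneg.2 (by positivity)
    rw [hk]
    exact_mod_cast h
  have hk1 : k ≤ δ * m := Int.floor_le _
  have hk2 : δ * m < k + 1 := Int.lt_floor_add_one _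
  have hkm : k ≤ m := hk1.trans (by nlinarith)
  -- B bounds
  set B : ℝ := δ - k / m with hB
  have hB0 : 0 ≤ B := by
    rw [hB]
    have : k / m ≤ δ := by rw [div_le_iff₀ hm0]; linarith
    linarith
  have hB1 : B ≤ 1 / m := by
    rw [hB, sub_le_iff_le_add, ← add_div, le_div_iff₀ hm0]
    linarith
  -- x = π k / m ∈ [0, π]
  set x : ℝ := Real.pi * k / m with hx
  have hπ := Real.pi_pos
  have hx0 : 0 ≤ x := by positivity
  have hxπ : x ≤ Real.pi := by
    rw [hx, div_le_iff₀ hm0]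
    nlinarith
  have hsinx0 : 0 ≤ Real.sin x := Real.sin_nonneg_of_nonneg_of_le_pi hx0 hxπ
  have hsinx1 : Real.sin x ≤ 1 := Real.sin_le_one x
  -- t = m sin(π/m)
  set t : ℝ := m * Real.sin (Real.pi / m) with ht
  have hπm0 : 0 ≤ Real.pi / m := by positivity
  have hπm2 : Real.pi / m ≤ Real.pi / 2 := by
    apply div_le_div_of_nonneg_left hπ.le (by norm_num) (by linarith)
  have ht2 : 2 ≤ t := by
    have := Real.mul_le_sin hπm0 hπm2
    have h2 : 2 / Real.pi * (Real.pi / m) = 2 / m := by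
      field_simp
    rw [h2] at this
    rw [ht]; rw [div_le_iff₀ hm0] at this
    linarith [this]
  have ht0 : 0 < t := by linarith
  have htπ : t ≤ Real.pi := by
    have := Real.sin_le hπm0
    rw [ht]
    calc (m:ℝ) * Real.sin (Real.pi / m) ≤ m * (Real.pi / m) := by nlinarith
    _ = Real.pi := by field_simp
  have htlow : Real.pi - t ≤ Real.pi ^ 2 / (2 * m) := by
    have := sub_sq_le_sin hπm0
    have h1 : (m:ℝ) * (Real.pi / m - (Real.pi / m)^2 / 2) ≤ t := by
      rw [ht]; nlinarith
    have h2 : (m:ℝ) * (Real.pi / m - (Real.pi / m)^2 / 2) = Real.pi - Real.pi^2 / (2*m) := by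
      field_simp
    rw [h2] at h1
    linarith
  -- A
  set A : ℝ := Real.sin x / t with hA
  have hA0 : 0 ≤ A := by positivity
  -- step 1: |S - A| ≤ B
  have hstep1 : |S δ m - A| ≤ B := by
    have hSval : S δ m = ‖(A:ℂ) + (B:ℂ) * e ((k + 1) / (2 * m))‖ := by
      rw [S, hA, hB, ht, hx, hk]
    rw [hSval]
    have h1 : |‖(A:ℂ) + (B:ℂ) * e ((k + 1) / (2 * m))‖ - ‖(A:ℂ)‖|
        ≤ ‖(B:ℂ) * e ((k + 1) / (2 * m))‖ := by
      have := abs_norm_sub_norm_le ((A:ℂ) + (B:ℂ) * e ((k + 1) / (2 * m))) ((A:ℂ))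
      simpa using this
    have h2 : ‖(B:ℂ) * e ((k + 1) / (2 * m))‖ = B := by
      rw [norm_mul, abs_e, Complex.norm_of_nonneg hB0, mul_one]
    have h3 : ‖(A:ℂ)‖ = A := by
      rw [Complex.norm_of_nonneg hA0]
    rw [h2, h3] at h1
    exact h1
  clear_value k B x t A
  -- step 2: |A - sin(πδ)/π| ≤ 3π/(4m)
  have hsindiff : |Real.sin x - Real.sin (Real.pi * δ)| ≤ Real.pi / m := by
    have hlip := sin_lip x (Real.pi * δ)
    have hxd : |x - Real.pi * δ| = Real.pi * B := by
      rw [hx, hB, abs_of_nonpos, neg_sub]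
      · ring
      · have : k / m ≤ δ := by rw [div_le_iff₀ hm0]; linarith
        have : Real.pi * (k/m) ≤ Real.pi * δ := by nlinarith
        rw [mul_div_assoc]
        linarith
    rw [hxd] at hlip
    calc |Real.sin x - Real.sin (Real.pi * δ)| ≤ Real.pi * B := hlip
    _ ≤ Real.pi * (1/m) := mul_le_mul_of_nonneg_left hB1 hπ.le
    _ = Real.pi / m := by ring
  have hstep2 : |A - Real.sin (Real.pi * δ) / Real.pi| ≤ 3 * Real.pi / (4 * m) := by
    have hden : A - Real.sin (Real.pi * δ) / Real.pi
        = (Real.pi * (Real.sin x - Real.sin (Real.pi * δ)) + Real.sin (Real.pi * δ) * (Real.pi - t)) / (t * Real.pi) := by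
      rw [hA]
      field_simp
      ring
    rw [hden, abs_div]
    have hnum : |Real.pi * (Real.sin x - Real.sin (Real.pi * δ)) + Real.sin (Real.pi * δ) * (Real.pi - t)|
        ≤ 3 * Real.pi ^ 2 / (2 * m) := by
      calc |Real.pi * (Real.sin x - Real.sin (Real.pi * δ)) + Real.sin (Real.pi * δ) * (Real.pi - t)|
          ≤ |Real.pi * (Real.sin x - Real.sin (Real.pi * δ))| + |Real.sin (Real.pi * δ) * (Real.pi - t)| :=
            abs_add_le _ _
        _ ≤ Real.pi * (Real.pi / m) + 1 * (Real.pi ^ 2 / (2 * m)) := by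
            rw [abs_mul, abs_mul, abs_of_pos hπ]
            gcongr
            · exact Real.abs_sin_le_one _
            · rw [_root_.abs_of_nonneg (by linarith : (0:ℝ) ≤ Real.pi - t)]; exact htlow
        _ = 3 * Real.pi ^ 2 / (2 * m) := by field_simp; ring
    have hdenpos : (0:ℝ) < t * Real.pi := by positivity
    have hdeneq : |t * Real.pi| = t * Real.pi := abs_of_pos hdenpos
    rw [hdeneq]
    calc |Real.pi * (Real.sin x - Real.sin (Real.pi * δ)) + Real.sin (Real.pi * δ) * (Real.pi - t)| / (t * Real.pi)
        ≤ (3 * Real.pi ^ 2 / (2 * m)) / (t * Real.pi) := by gcongr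
      _ ≤ (3 * Real.pi ^ 2 / (2 * m)) / (2 * Real.pi) := by
          gcongr
      _ = 3 * Real.pi / (4 * m) := by
          rw [div_div]
          rw [show (2 * (m:ℝ)) * (2 * Real.pi) = (4 * m) * Real.pi by ring]
          rw [← div_div, mul_comm 3 (Real.pi ^ 2), pow_two, mul_assoc, mul_div_assoc,
            mul_div_cancel_left₀ _ (ne_of_gt hπ)]
          ring
  -- combine
  have h4 := Real.pi_le_four
  calc |S δ m - Real.sin (Real.pi * δ) / Real.pi|
      ≤ |S δ m - A| + |A - Real.sin (Real.pi * δ) / Real.pi| := abs_sub_le _ _ _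
    _ ≤ B + 3 * Real.pi / (4 * m) := add_le_add hstep1 hstep2
    _ ≤ 1/m + 3 / m := by
        have : 3 * Real.pi / (4 * m) ≤ 3 / m := by
          rw [div_le_div_iff₀ (by positivity) hm0]
          nlinarith
        linarith
    _ ≤ 10 / m := by
        rw [← add_div]
        exact (div_le_div_iff_of_pos_right hm0).2 (by norm_num)
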